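/- arXiv:1801.01318 — 9 statements merged into one kernel-verified Lean document; each statement's English description precedes it below -/
import Mathlib

section
/- Let A be an integral domain which is an ℝ-algebra. Let I₀, J₀ be ℝ-linearly independent imaginary units, let f = f₀ + f₁·ι(I₀) and h = h₀ + h₁·ι(J₀) with f₀, f₁, h₀, h₁ ∈ A and f₁ ≠ 0, h₁ ≠ 0, and let K₀ be an imaginary unit. Then f + h is K₀-sliced if and only if there exist a, b ∈ ℝ \ {0} such that K₀ = aI₀ + bJ₀ and b·f₁ = a·h₁ in A (real scalars acting via algebraMap ℝ A). (Proposition 4.1.) -/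
open Quaternion

/-- The componentwise extension `ι : ℍ[ℝ] → ℍ[A]` of `algebraMap ℝ A`. -/
noncomputable def qmap {A : Type*} [CommRing A] [Algebra ℝ A] (q : Quaternion ℝ) :
    Quaternion A :=
  ⟨algebraMap ℝ A q.re, algebraMap ℝ A q.imI, algebraMap ℝ A q.imJ, algebraMap ℝ A q.imK⟩

/-- An imaginary unit: a real quaternion with zero real part squaring to `-1`. -/
def IsImaginaryUnit (I : Quaternion ℝ) : Prop := I.re = 0 ∧ I ^ 2 = -1

/-- `q` is `I`-sliced if `q = a + b·ι(I)` for some `a, b ∈ A`. -/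
noncomputable def IsSliced {A : Type*} [CommRing A] [Algebra ℝ A]
    (I : Quaternion ℝ) (q : Quaternion A) : Prop :=
  ∃ a b : A, q = (a : Quaternion A) + (b : Quaternion A) * qmap I

/-! Since `I₀, J₀, K₀` are purely imaginary, `f + h` is `K₀`-sliced exactly when its vector part
`f₁ ι(I₀) + h₁ ι(J₀)` is `c ι(K₀)` for some `c ∈ A`. Over a domain, `ι` sends `ℝ`-linearly
independent families to `A`-linearly independent ones. So if `K₀ ∉ span {I₀, J₀}`, independence
of `K₀, I₀, J₀` forces `f₁ = 0`; otherwise `K₀ = a I₀ + b J₀`, and comparing coefficients gives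
`f₁ = c a`, `h₁ = c b`, hence `b f₁ = a h₁` with `a, b ≠ 0`. Conversely `c = a⁻¹ f₁` works. -/

section qmap

variable {A : Type*} [CommRing A] [Algebra ℝ A]

@[simp] lemma re_qmap (x : ℍ[ℝ]) : (qmap x : ℍ[A]).re = algebraMap ℝ A x.re := rfl
@[simp] lemma imI_qmap (x : ℍ[ℝ]) : (qmap x : ℍ[A]).imI = algebraMap ℝ A x.imI := rfl
@[simp] lemma imJ_qmap (x : ℍ[ℝ]) : (qmap x : ℍ[A]).imJ = algebraMap ℝ A x.imJ := rfl
@[simp] lemma imK_qmap (x : ℍ[ℝ]) : (qmap x : ℍ[A]).imK = algebraMap ℝ A x.imK := rfl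

lemma qmap_add (x y : ℍ[ℝ]) : (qmap (x + y) : ℍ[A]) = qmap x + qmap y := by
  ext <;> simp

lemma qmap_smul (r : ℝ) (x : ℍ[ℝ]) : (qmap (r • x) : ℍ[A]) = algebraMap ℝ A r • qmap x := by
  ext <;> simp [Algebra.smul_def]

lemma im_qmap {x : ℍ[ℝ]} (hx : x.re = 0) : (qmap x : ℍ[A]).im = qmap x := by
  ext <;> simp [hx]

lemma im_coe_add_coe_mul_qmap {x : ℍ[ℝ]} (hx : x.re = 0) (a b : A) :
    ((a : ℍ[A]) + (b : ℍ[A]) * qmap x).im = b • qmap x := by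
  rw [im_add, im_coe, zero_add, coe_mul_eq_smul, im_smul, im_qmap hx]

lemma linearEquivTuple_qmap (x : ℍ[ℝ]) :
    QuaternionAlgebra.linearEquivTuple (-1 : A) 0 (-1) (qmap x) =
      algebraMap ℝ A ∘ QuaternionAlgebra.linearEquivTuple (-1 : ℝ) 0 (-1) x := by
  ext i; fin_cases i <;> rfl

lemma linearIndependent_qmap_iff [IsDomain A] {ι : Type*} {v : ι → ℍ[ℝ]} :
    LinearIndependent A (fun i ↦ (qmap (v i) : ℍ[A])) ↔ LinearIndependent ℝ v := by
  let eA := QuaternionAlgebra.linearEquivTuple (-1 : A) 0 (-1)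
  let eR := QuaternionAlgebra.linearEquivTuple (-1 : ℝ) 0 (-1)
  calc LinearIndependent A (fun i ↦ (qmap (v i) : ℍ[A]))
      ↔ LinearIndependent A (eA.toLinearMap ∘ fun i ↦ qmap (v i)) :=
        (eA.toLinearMap.linearIndependent_iff_of_injOn eA.injective.injOn).symm
    _ ↔ LinearIndependent A (fun i ↦ algebraMap ℝ A ∘ eR (v i)) := by
        rw [show (eA.toLinearMap ∘ fun i ↦ qmap (v i)) = fun i ↦ algebraMap ℝ A ∘ eR (v i) from
          funext fun i ↦ linearEquivTuple_qmap (v i)]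
    _ ↔ LinearIndependent ℝ (eR.toLinearMap ∘ v) := linearIndependent_algebraMap_comp_iff
    _ ↔ LinearIndependent ℝ v := eR.toLinearMap.linearIndependent_iff_of_injOn eR.injective.injOn

end qmap

lemma isSliced_iff_im_eq_smul {A : Type*} [CommRing A] [Algebra ℝ A] {K : ℍ[ℝ]} (hK : K.re = 0)
    (q : ℍ[A]) : IsSliced K q ↔ ∃ c : A, q.im = c • qmap K := by
  constructor
  · rintro ⟨a, c, rfl⟩
    exact ⟨c, im_coe_add_coe_mul_qmap hK a c⟩
  · rintro ⟨c, hc⟩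
    exact ⟨q.re, c, by rw [coe_mul_eq_smul, ← hc, re_add_im]⟩

section

variable {A : Type*} [CommRing A] [IsDomain A] [Algebra ℝ A] {I J K : ℍ[ℝ]} {f₁ h₁ c : A}

lemma mem_span_pair_of_smul_qmap_add_smul_qmap_eq (hind : LinearIndependent ℝ ![I, J])
    (hf₁ : f₁ ≠ 0) (h : f₁ • qmap I + h₁ • qmap J = c • (qmap K : ℍ[A])) :
    K ∈ Submodule.span ℝ {I, J} := by
  by_contra hK
  have hind₃ : LinearIndependent ℝ ![K, I, J] :=
    linearIndependent_finCons.mpr ⟨hind, by rwa [Matrix.range_cons_cons_empty]⟩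
  have hdep : ∑ i, ![-c, f₁, h₁] i • (qmap (![K, I, J] i) : ℍ[A]) = 0 := by
    simp [Fin.sum_univ_three, add_assoc, h]
  exact hf₁ (Fintype.linearIndependent_iff.mp (linearIndependent_qmap_iff.mpr hind₃) _ hdep 1)

lemma eq_mul_of_smul_qmap_add_smul_qmap_eq (hind : LinearIndependent ℝ ![I, J]) {a b : ℝ}
    (h : f₁ • qmap I + h₁ • qmap J = c • (qmap (a • I + b • J) : ℍ[A])) :
    f₁ = c * algebraMap ℝ A a ∧ h₁ = c * algebraMap ℝ A b := by
  have hindA : LinearIndependent A ![(qmap I : ℍ[A]), qmap J] := by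
    convert (linearIndependent_qmap_iff (A := A)).mpr hind using 1
    funext i; fin_cases i <;> rfl
  rw [qmap_add, qmap_smul, qmap_smul] at h
  have hcoeff := LinearIndependent.pair_iff.mp hindA (f₁ - c * algebraMap ℝ A a)
    (h₁ - c * algebraMap ℝ A b) (by linear_combination (norm := module) h)
  simpa [sub_eq_zero] using hcoeff

end

theorem sum_one_slice_preserving {A : Type*} [CommRing A] [IsDomain A] [Algebra ℝ A]
    (I₀ J₀ K₀ : Quaternion ℝ)
    (hI₀ : IsImaginaryUnit I₀) (hJ₀ : IsImaginaryUnit J₀) (hK₀ : IsImaginaryUnit K₀)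
    (hind : LinearIndependent ℝ ![I₀, J₀])
    (f₀ f₁ h₀ h₁ : A) (hf₁ : f₁ ≠ 0) (hh₁ : h₁ ≠ 0)
    (f h : Quaternion A)
    (hf : f = (f₀ : Quaternion A) + (f₁ : Quaternion A) * qmap I₀)
    (hh : h = (h₀ : Quaternion A) + (h₁ : Quaternion A) * qmap J₀) :
    IsSliced K₀ (f + h) ↔
      ∃ a b : ℝ, a ≠ 0 ∧ b ≠ 0 ∧ K₀ = a • I₀ + b • J₀ ∧
        algebraMap ℝ A b * f₁ = algebraMap ℝ A a * h₁ := by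
  have him : (f + h).im = f₁ • qmap I₀ + h₁ • qmap J₀ := by
    rw [im_add, hf, hh, im_coe_add_coe_mul_qmap hI₀.1, im_coe_add_coe_mul_qmap hJ₀.1]
  rw [isSliced_iff_im_eq_smul hK₀.1, him]
  constructor
  · rintro ⟨c, hc⟩
    obtain ⟨a, b, hK⟩ :=
      Submodule.mem_span_pair.mp (mem_span_pair_of_smul_qmap_add_smul_qmap_eq hind hf₁ hc)
    rw [← hK] at hc
    obtain ⟨rfl, rfl⟩ := eq_mul_of_smul_qmap_add_smul_qmap_eq hind hc
    refine ⟨a, b, ?_, ?_, hK.symm, by ring⟩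
    · rintro rfl
      simp at hf₁
    · rintro rfl
      simp at hh₁
  · rintro ⟨a, b, ha, -, rfl, hab⟩
    refine ⟨algebraMap ℝ A a⁻¹ * f₁, ?_⟩
    have hinv : algebraMap ℝ A a⁻¹ * algebraMap ℝ A a = 1 := by
      rw [← map_mul, inv_mul_cancel₀ ha, map_one]
    rw [qmap_add, qmap_smul, qmap_smul, smul_add, smul_smul, smul_smul]
    congr 2
    · linear_combination -f₁ * hinv
    · linear_combination -algebraMap ℝ A a⁻¹ * hab - h₁ * hinv
end

section
/- Let A be a formally real integral domain which is an ℝ-algebra. For all f, h ∈ Quaternion A with f ≠ 0 and h ≠ 0, the product f * h is scalar (has zero vector part) if and only if h * f is scalar. (First claim of Remark 4.2.) -/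
open Quaternion

/-- `q` is scalar if its vector part vanishes. -/
def IsScalarQ {A : Type*} [CommRing A] (q : Quaternion A) : Prop := q.im = 0

/-- `A` is formally real: a sum of four squares vanishes only trivially. -/
def FormallyRealFour (A : Type*) [CommRing A] : Prop :=
  ∀ a b c d : A, a ^ 2 + b ^ 2 + c ^ 2 + d ^ 2 = 0 → a = 0 ∧ b = 0 ∧ c = 0 ∧ d = 0

private lemma normSq_ne_zero_aux {A : Type*} [CommRing A] (hFR : FormallyRealFour A)
    {f : Quaternion A} (hf : f ≠ 0) : (normSq f : A) ≠ 0 := by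
  intro h0
  rw [normSq_def'] at h0
  obtain ⟨h1, h2, h3, h4⟩ := hFR _ _ _ _ h0
  apply hf
  ext <;> simp [h1, h2, h3, h4]

private lemma scalar_eq_coe {A : Type*} [CommRing A] {q : Quaternion A}
    (hq : IsScalarQ q) : q = (q.re : Quaternion A) := by
  have h1 : q.imI = 0 := congrArg QuaternionAlgebra.imI hq
  have h2 : q.imJ = 0 := congrArg QuaternionAlgebra.imJ hq
  have h3 : q.imK = 0 := congrArg QuaternionAlgebra.imK hq
  ext <;> simp [h1, h2, h3]

private lemma aux_dir {A : Type*} [CommRing A] [IsDomain A]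
    (hFR : FormallyRealFour A) (f h : Quaternion A) (hf : f ≠ 0)
    (hs : IsScalarQ (f * h)) : IsScalarQ (h * f) := by
  set c : A := (f * h).re with hc
  set n : A := normSq f with hn'
  have hfh : f * h = (c : Quaternion A) := scalar_eq_coe hs
  have key : (n : Quaternion A) * (h * f) = (n : Quaternion A) * (c : Quaternion A) := by
    have h1 : star f * (f * h) = star f * (c : Quaternion A) := by rw [hfh]
    rw [← mul_assoc, star_mul_self, ← hn'] at h1
    calc (n : Quaternion A) * (h * f) = (n : Quaternion A) * h * f := by
          rw [mul_assoc]
      _ = star f * (c : Quaternion A) * f := by rw [h1]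
      _ = (c : Quaternion A) * (star f * f) := by
          rw [(Quaternion.coe_commute c (star f)).symm.eq, mul_assoc]
      _ = (c : Quaternion A) * (n : Quaternion A) := by rw [star_mul_self, ← hn']
      _ = (n : Quaternion A) * (c : Quaternion A) := by
          rw [← Quaternion.coe_mul, ← Quaternion.coe_mul, mul_comm]
  have hn : n ≠ 0 := normSq_ne_zero_aux hFR hf
  have heq : h * f = (c : Quaternion A) := by
    have hsub : (n : Quaternion A) * (h * f - (c : Quaternion A)) = 0 := by
      rw [mul_sub, key, sub_self]
    have hz : h * f - (c : Quaternion A) = 0 := by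
      set q := h * f - (c : Quaternion A)
      have e1 : n * q.re = 0 := by
        simpa using congrArg QuaternionAlgebra.re hsub
      have e2 : n * q.imI = 0 := by
        simpa using congrArg QuaternionAlgebra.imI hsub
      have e3 : n * q.imJ = 0 := by
        simpa using congrArg QuaternionAlgebra.imJ hsub
      have e4 : n * q.imK = 0 := by
        simpa using congrArg QuaternionAlgebra.imK hsub
      have z1 := (mul_eq_zero.mp e1).resolve_left hn
      have z2 := (mul_eq_zero.mp e2).resolve_left hn
      have z3 := (mul_eq_zero.mp e3).resolve_left hn
      have z4 := (mul_eq_zero.mp e4).resolve_left hn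
      ext <;> simp [z1, z2, z3, z4]
    exact sub_eq_zero.mp hz
  show (h * f).im = 0
  rw [heq]
  ext <;> simp

theorem mul_scalar_comm {A : Type*} [CommRing A] [IsDomain A] [Algebra ℝ A]
    (hFR : FormallyRealFour A) (f h : Quaternion A) (hf : f ≠ 0) (hh : h ≠ 0) :
    IsScalarQ (f * h) ↔ IsScalarQ (h * f) := by
  exact ⟨aux_dir hFR f h hf, aux_dir hFR h f hh⟩
end

section
/- Let A be a formally real integral domain which is an ℝ-algebra. For all f, h ∈ Quaternion A with f ≠ 0 and h ≠ 0, the product f * h is scalar (has zero vector part) if and only if f and star h are linearly dependent over A, i.e. there exist α, β ∈ A, not both zero, with α·f + β·(star h) = 0. (Second claim of Remark 4.2.) -/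
open Quaternion

/-!
If `f * h = r` is scalar, then `normSq h • f = f * h * star h = r • star h`. Conversely, from
`α f + β h* = 0` we get `α (f h) = -β h* h = -β normSq h`, a scalar, and `α ≠ 0` can be cancelled
because `A` is a domain; `α = 0` is impossible since then `β h* = 0` with `β ≠ 0` and `h ≠ 0`.
Formal reality is what makes `normSq h` nonzero.
-/

section

variable {A : Type*} [CommRing A]

theorem Quaternion.normSq_ne_zero_of_formallyRealFour (hA : FormallyRealFour A) {q : ℍ[A]}
    (hq : q ≠ 0) : normSq q ≠ 0 := by
  intro h0
  rw [normSq_def'] at h0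
  obtain ⟨h1, h2, h3, h4⟩ := hA _ _ _ _ h0
  exact hq (Quaternion.ext _ _ h1 h2 h3 h4)

theorem isScalarQ_iff_eq_coe_re {q : ℍ[A]} : IsScalarQ q ↔ q = q.re := by
  constructor
  · intro hq
    conv_lhs => rw [← re_add_im q, hq, add_zero]
  · intro hq
    rw [IsScalarQ, hq, im_coe]

theorem isScalarQ_coe (a : A) : IsScalarQ (a : ℍ[A]) := im_coe a

theorem isScalarQ_of_coe_mul [IsDomain A] {a : A} (ha : a ≠ 0) {q : ℍ[A]}
    (hq : IsScalarQ ((a : ℍ[A]) * q)) : IsScalarQ q := by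
  rw [IsScalarQ, coe_mul_eq_smul, im_smul, smul_eq_zero] at hq
  exact hq.resolve_left ha

theorem Quaternion.coe_normSq_mul (f h : ℍ[A]) : ((normSq h : A) : ℍ[A]) * f = f * h * star h := by
  rw [mul_assoc, self_mul_star, coe_commutes]

theorem Quaternion.coe_mul_mul_eq_of_add_eq_zero {α β : A} {f h : ℍ[A]}
    (hαβ : (α : ℍ[A]) * f + (β : ℍ[A]) * star h = 0) :
    (α : ℍ[A]) * (f * h) = ((-(β * normSq h) : A) : ℍ[A]) := by
  rw [← mul_assoc, eq_neg_of_add_eq_zero_left hαβ, neg_mul, mul_assoc, star_mul_self,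
    Quaternion.coe_neg, Quaternion.coe_mul]

end

theorem mul_scalar_iff_linearly_dependent_general {A : Type*} [CommRing A] [IsDomain A]
    (hFR : FormallyRealFour A) (f h : Quaternion A) (hh : h ≠ 0) :
    IsScalarQ (f * h) ↔
      ∃ α β : A, (α ≠ 0 ∨ β ≠ 0) ∧
        (α : Quaternion A) * f + (β : Quaternion A) * star h = 0 := by
  constructor
  · intro hs
    refine ⟨normSq h, -(f * h).re, Or.inl (normSq_ne_zero_of_formallyRealFour hFR hh), ?_⟩
    rw [coe_normSq_mul, Quaternion.coe_neg, ← isScalarQ_iff_eq_coe_re.mp hs, neg_mul,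
      add_neg_cancel]
  · rintro ⟨α, β, hne, hαβ⟩
    by_cases hα : α = 0
    · subst hα
      have hβ : β ≠ 0 := hne.resolve_left (not_not.mpr rfl)
      rw [coe_zero, zero_mul, zero_add, coe_mul_eq_smul, smul_eq_zero, star_eq_zero] at hαβ
      exact absurd (hαβ.resolve_left hβ) hh
    · apply isScalarQ_of_coe_mul hα
      rw [coe_mul_mul_eq_of_add_eq_zero hαβ]
      exact isScalarQ_coe _

theorem mul_scalar_iff_linearly_dependent {A : Type*} [CommRing A] [IsDomain A] [Algebra ℝ A]
    (hFR : FormallyRealFour A) (f h : Quaternion A) (hf : f ≠ 0) (hh : h ≠ 0) :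
    IsScalarQ (f * h) ↔
      ∃ α β : A, (α ≠ 0 ∨ β ≠ 0) ∧
        (α : Quaternion A) * f + (β : Quaternion A) * star h = 0 :=
  mul_scalar_iff_linearly_dependent_general hFR f h hh
end

section
/- Let A be a commutative ring which is an ℝ-algebra, let I₀ be an imaginary unit and let f, g ∈ Quaternion A. The following are equivalent: (i) f * g is I₀-sliced; (ii) ⟨f, ι(M₀) * star g⟩ = 0 for every imaginary unit M₀ whose vector part is orthogonal to that of I₀ in ℝ³; (iii) ⟨star f, g * ι(M₀)⟩ = 0 for every imaginary unit M₀ whose vector part is orthogonal to that of I₀ in ℝ³. (Proposition 4.5.) -/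
/-!
For `h = f * g`, cyclicity of the real part gives `⟨f, ι(M) * star g⟩ = -Re(h ι(M))` and
`⟨star f, g * ι(M)⟩ = Re(h ι(M))` when `M` is purely imaginary, so both orthogonality relations say
that the vector part of `h` is orthogonal to `M` for every unit `M ⊥ I₀`. The relation is homogeneous
in `M`, hence holds for all `M ⊥ I₀`; testing it on the projections of the standard basis onto `I₀⊥`
shows that the vector part of `h` is a multiple `b I₀`, i.e. `h = Re h + b ι(I₀)`. Conversely, the
vector part of `a + b ι(I₀)` is `b I₀`, which is orthogonal to every such `M`.
-/

open Quaternion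

/-- The vector parts of `I` and `M` are orthogonal in `ℝ³`. -/
def OrthIm (I M : Quaternion ℝ) : Prop :=
  I.imI * M.imI + I.imJ * M.imJ + I.imK * M.imK = 0

/-- The pairing `⟨u,v⟩_*`: the scalar part of `u * star v`. -/
def pairStar {A : Type*} [CommRing A] (u v : Quaternion A) : A := (u * star v).re

namespace QuaternionSlice

variable {A : Type*} [CommRing A] [Algebra ℝ A]

@[simp] lemma qmap_re (m : ℍ[ℝ]) : (qmap m : ℍ[A]).re = algebraMap ℝ A m.re := rfl
@[simp] lemma qmap_imI (m : ℍ[ℝ]) : (qmap m : ℍ[A]).imI = algebraMap ℝ A m.imI := rfl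
@[simp] lemma qmap_imJ (m : ℍ[ℝ]) : (qmap m : ℍ[A]).imJ = algebraMap ℝ A m.imJ := rfl
@[simp] lemma qmap_imK (m : ℍ[ℝ]) : (qmap m : ℍ[A]).imK = algebraMap ℝ A m.imK := rfl

lemma qmap_smul (r : ℝ) (m : ℍ[ℝ]) : (qmap (r • m) : ℍ[A]) = r • qmap m := by
  ext <;> exact map_smul (Algebra.linearMap ℝ A) r _

lemma qmap_mul (p q : ℍ[ℝ]) : (qmap (p * q) : ℍ[A]) = qmap p * qmap q := by
  ext <;> simp [Quaternion.re_mul, Quaternion.imI_mul, Quaternion.imJ_mul, Quaternion.imK_mul]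

lemma star_qmap {m : ℍ[ℝ]} (hm : m.re = 0) : (star (qmap m) : ℍ[A]) = -qmap m := by
  ext <;> simp [hm]

omit [Algebra ℝ A] in
lemma re_mul_comm (x y : ℍ[A]) : (x * y).re = (y * x).re := by
  simp only [Quaternion.re_mul]; ring

omit [Algebra ℝ A] in
lemma pairStar_mul_star (f g v : ℍ[A]) : pairStar f (v * star g) = (f * g * star v).re := by
  rw [pairStar, star_mul, star_star, mul_assoc]

omit [Algebra ℝ A] in
lemma pairStar_star_mul (f g v : ℍ[A]) : pairStar (star f) (g * v) = (f * g * v).re := by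
  rw [pairStar, ← star_mul, Quaternion.re_star, re_mul_comm, mul_assoc]

lemma isImaginaryUnit_iff {M : ℍ[ℝ]} : IsImaginaryUnit M ↔ M.re = 0 ∧ Quaternion.normSq M = 1 := by
  refine and_congr_right fun hM => ?_
  rw [Quaternion.sq_eq_neg_normSq.2 hM, neg_inj]
  exact Quaternion.coe_inj

lemma orthIm_smul {I m : ℍ[ℝ]} (h : OrthIm I m) (r : ℝ) : OrthIm I (r • m) := by
  unfold OrthIm at h ⊢
  simp only [Quaternion.imI_smul, Quaternion.imJ_smul, Quaternion.imK_smul, smul_eq_mul]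
  linear_combination r * h

lemma re_mul_qmap (h : ℍ[A]) {m : ℍ[ℝ]} (hm : m.re = 0) :
    (h * qmap m).re =
      -(h.imI * algebraMap ℝ A m.imI + h.imJ * algebraMap ℝ A m.imJ + h.imK * algebraMap ℝ A m.imK) := by
  simp only [Quaternion.re_mul, qmap_re, qmap_imI, qmap_imJ, qmap_imK, hm, map_zero]
  ring

lemma re_mul_qmap_eq_zero_of_isSliced {I M : ℍ[ℝ]} {h : ℍ[A]} (hh : IsSliced I h) (hI : I.re = 0)
    (hM : M.re = 0) (hIM : OrthIm I M) : (h * qmap M).re = 0 := by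
  obtain ⟨a, b, rfl⟩ := hh
  have hIM0 : (I * M).re = 0 := by
    unfold OrthIm at hIM
    rw [Quaternion.re_mul, hI, hM]
    linear_combination -hIM
  simp [add_mul, ← qmap_mul, Quaternion.coe_mul_eq_smul, hM, hIM0]

lemma re_mul_qmap_eq_zero_of_forall_isImaginaryUnit {I m : ℍ[ℝ]} {h : ℍ[A]}
    (H : ∀ M, IsImaginaryUnit M → OrthIm I M → (h * qmap M).re = 0) (hm : m.re = 0)
    (hIm : OrthIm I m) : (h * qmap m).re = 0 := by
  rcases eq_or_ne m 0 with rfl | hm0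
  · simp [re_mul_qmap h hm]
  have hr : ‖m‖ ≠ 0 := norm_ne_zero_iff.2 hm0
  have hunit : IsImaginaryUnit (‖m‖⁻¹ • m) := by
    refine isImaginaryUnit_iff.2 ⟨by simp [Quaternion.re_smul, hm], ?_⟩
    rw [Quaternion.normSq_smul, Quaternion.normSq_eq_norm_mul_self]
    field_simp
  rw [← smul_inv_smul₀ hr m, qmap_smul, mul_smul_comm, Quaternion.re_smul,
    H _ hunit (orthIm_smul hIm _), smul_zero]

lemma isSliced_of_forall_re_mul_qmap_eq_zero {I : ℍ[ℝ]} {h : ℍ[A]} (hI : I.re = 0)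
    (hI1 : Quaternion.normSq I = 1) (H : ∀ m, m.re = 0 → OrthIm I m → (h * qmap m).re = 0) :
    IsSliced I h := by
  have hn : I.imI ^ 2 + I.imJ ^ 2 + I.imK ^ 2 = 1 := by
    rw [Quaternion.normSq_def', hI] at hI1
    linear_combination hI1
  have key : ∀ m : ℍ[ℝ], m.re = 0 → OrthIm I m →
      h.imI * algebraMap ℝ A m.imI + h.imJ * algebraMap ℝ A m.imJ
        + h.imK * algebraMap ℝ A m.imK = 0 := fun m hm hIm =>
    neg_eq_zero.1 (re_mul_qmap h hm ▸ H m hm hIm)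
  -- test against the projections `eᵢ - Iᵢ I` of the basis vectors onto `I⊥`
  have E1 := key ⟨0, 1 - I.imI * I.imI, -(I.imI * I.imJ), -(I.imI * I.imK)⟩ rfl
    (by unfold OrthIm; linear_combination (-I.imI) * hn)
  have E2 := key ⟨0, -(I.imJ * I.imI), 1 - I.imJ * I.imJ, -(I.imJ * I.imK)⟩ rfl
    (by unfold OrthIm; linear_combination (-I.imJ) * hn)
  have E3 := key ⟨0, -(I.imK * I.imI), -(I.imK * I.imJ), 1 - I.imK * I.imK⟩ rfl
    (by unfold OrthIm; linear_combination (-I.imK) * hn)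
  simp only [map_sub, map_mul, map_neg, map_one] at E1 E2 E3
  set b := h.imI * algebraMap ℝ A I.imI + h.imJ * algebraMap ℝ A I.imJ
    + h.imK * algebraMap ℝ A I.imK
  have h1 : h.imI = b * algebraMap ℝ A I.imI := by linear_combination E1
  have h2 : h.imJ = b * algebraMap ℝ A I.imJ := by linear_combination E2
  have h3 : h.imK = b * algebraMap ℝ A I.imK := by linear_combination E3
  refine ⟨h.re, b, ?_⟩
  ext <;> simp [hI, h1, h2, h3]

lemma isSliced_iff_forall_re_mul_qmap_eq_zero {I : ℍ[ℝ]} (hI : IsImaginaryUnit I) (h : ℍ[A]) :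
    IsSliced I h ↔ ∀ M, IsImaginaryUnit M → OrthIm I M → (h * qmap M).re = 0 := by
  obtain ⟨hI0, hI1⟩ := isImaginaryUnit_iff.1 hI
  refine ⟨fun hh M hM hIM => re_mul_qmap_eq_zero_of_isSliced hh hI0 hM.1 hIM, fun H => ?_⟩
  exact isSliced_of_forall_re_mul_qmap_eq_zero hI0 hI1 fun m hm hIm =>
    re_mul_qmap_eq_zero_of_forall_isImaginaryUnit H hm hIm

end QuaternionSlice

open QuaternionSlice in
theorem product_sliced_iff_orthogonality_relations {A : Type*} [CommRing A] [Algebra ℝ A]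
    (I₀ : Quaternion ℝ) (hI₀ : IsImaginaryUnit I₀) (f g : Quaternion A) :
    List.TFAE
      [IsSliced I₀ (f * g),
       ∀ M₀ : Quaternion ℝ, IsImaginaryUnit M₀ → OrthIm I₀ M₀ →
         pairStar f (qmap M₀ * star g) = 0,
       ∀ M₀ : Quaternion ℝ, IsImaginaryUnit M₀ → OrthIm I₀ M₀ →
         pairStar (star f) (g * qmap M₀) = 0] := by
  tfae_have 1 ↔ 2 := by
    rw [isSliced_iff_forall_re_mul_qmap_eq_zero hI₀]
    refine forall_congr' fun M => forall_congr' fun hM => forall_congr' fun _ => ?_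
    rw [pairStar_mul_star, star_qmap hM.1, mul_neg, Quaternion.re_neg, neg_eq_zero]
  tfae_have 1 ↔ 3 := by
    rw [isSliced_iff_forall_re_mul_qmap_eq_zero hI₀]
    refine forall_congr' fun M => forall_congr' fun _ => forall_congr' fun _ => ?_
    rw [pairStar_star_mul]
  tfae_finish
end

section
/- Let A be a commutative ring which is an ℝ-algebra. For all f, h ∈ Quaternion A, writing h₀ ∈ A for the scalar part of h and f_v, h_v for the vector parts of f and h, the vector part of h * f * star h equals ⟨h_v, f_v⟩·h_v + h₀²·f_v + 2h₀·(h_v ∧ f_v) − (h_v ∧ f_v) ∧ h_v. (Lemma 5.2, equation (5.1).) -/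
/-!
In coordinates, `⟨h_v, f_v⟩` is the dot product and `h_v ∧ f_v` the cross product of the
vector parts: the commutator `u * v - v * u` is twice the cross product, and the `1/2` of the
wedge cancels that factor. The claim thus becomes the classical formula for conjugating a
vector by a quaternion, a polynomial identity in the components of `f` and `h`.
-/

open Quaternion

/-- The wedge `u ∧ v := (u*v − v*u)/2`. -/
noncomputable def wedgeQ {A : Type*} [CommRing A] [Algebra ℝ A] (u v : Quaternion A) :
    Quaternion A :=
  (2 : ℝ)⁻¹ • (u * v - v * u)

namespace Quaternion

variable {A : Type*} [CommRing A]

def cross (u v : Quaternion A) : Quaternion A :=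
  ⟨0, u.imJ * v.imK - u.imK * v.imJ, u.imK * v.imI - u.imI * v.imK,
    u.imI * v.imJ - u.imJ * v.imI⟩

section cross

variable (u v : Quaternion A)

@[simp] theorem re_cross : (cross u v).re = 0 := rfl
@[simp] theorem imI_cross : (cross u v).imI = u.imJ * v.imK - u.imK * v.imJ := rfl
@[simp] theorem imJ_cross : (cross u v).imJ = u.imK * v.imI - u.imI * v.imK := rfl
@[simp] theorem imK_cross : (cross u v).imK = u.imI * v.imJ - u.imJ * v.imI := rfl

theorem mul_sub_mul_eq_cross_add_cross : u * v - v * u = cross u v + cross u v := by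
  ext <;> simp only [re_sub, imI_sub, imJ_sub, imK_sub, re_add, imI_add, imJ_add, imK_add,
    re_mul, imI_mul, imJ_mul, imK_mul, re_cross, imI_cross, imJ_cross, imK_cross] <;> ring

theorem wedgeQ_eq_cross [Algebra ℝ A] : wedgeQ u v = cross u v := by
  rw [wedgeQ, mul_sub_mul_eq_cross_add_cross, ← two_smul ℝ, inv_smul_smul₀ two_ne_zero]

theorem pairStar_im_im :
    pairStar u.im v.im = u.imI * v.imI + u.imJ * v.imJ + u.imK * v.imK := by
  simp only [pairStar, re_mul, re_star, imI_star, imJ_star, imK_star, re_im, imI_im, imJ_im,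
    imK_im]
  ring

end cross

end Quaternion

theorem im_conjugation_formula {A : Type*} [CommRing A] [Algebra ℝ A]
    (f h : Quaternion A) :
    (h * f * star h).im =
      ((pairStar h.im f.im : A) : Quaternion A) * h.im
      + ((h.re ^ 2 : A) : Quaternion A) * f.im
      + ((2 * h.re : A) : Quaternion A) * wedgeQ h.im f.im
      - wedgeQ (wedgeQ h.im f.im) h.im := by
  simp only [wedgeQ_eq_cross, pairStar_im_im, coe_mul_eq_smul]
  ext <;> simp only [re_sub, imI_sub, imJ_sub, imK_sub, re_add, imI_add, imJ_add, imK_add,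
    re_mul, imI_mul, imJ_mul, imK_mul, re_smul, imI_smul, imJ_smul, imK_smul, smul_eq_mul,
    re_star, imI_star, imJ_star, imK_star, re_im, imI_im, imJ_im, imK_im,
    re_cross, imI_cross, imJ_cross, imK_cross] <;> ring
end

section
/- Let A be an integral domain which is an ℝ-algebra. For all f, h ∈ Quaternion A, one has h * f * star h = (star h) * f * h if and only if either the scalar part of h is zero, or the vector parts f_v and h_v are linearly dependent over A, i.e. there exist α, β ∈ A, not both zero, with α·f_v + β·h_v = 0. (Proposition 5.3.) -/
/-!
Since `star h = 2 h.re - h`, expanding gives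
`h * f * star h - star h * f * h = 2 h.re (h * f - f * h)`, and the commutator `h * f - f * h`
is twice the cross product of the vector parts of `h` and `f`. As `2` is invertible in an
`ℝ`-algebra and `A` has no zero divisors, the condition becomes `h.re = 0` or `h_v × f_v = 0`,
and over a domain the cross product of two vectors vanishes exactly when they are linearly
dependent.
-/

open Quaternion Matrix

theorem crossProduct_eq_zero_iff_exists {R : Type*} [CommRing R] [IsDomain R]
    {u v : Fin 3 → R} :
    u ⨯₃ v = 0 ↔ ∃ α β : R, (α ≠ 0 ∨ β ≠ 0) ∧ α • v + β • u = 0 := by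
  constructor
  · intro huv
    by_cases hv : v = 0
    · exact ⟨1, 0, .inl one_ne_zero, by simp [hv]⟩
    obtain ⟨i, hi⟩ := Function.ne_iff.1 hv
    -- `u i • v - v i • u` has the entries of `u ⨯₃ v` (up to sign) and `0` as its coordinates.
    refine ⟨u i, -v i, .inr (neg_ne_zero.2 hi), ?_⟩
    obtain ⟨h₀, h₁, h₂⟩ : u 1 * v 2 - u 2 * v 1 = 0 ∧ u 2 * v 0 - u 0 * v 2 = 0 ∧
        u 0 * v 1 - u 1 * v 0 = 0 := by
      simpa [cross_apply, funext_iff, Fin.forall_fin_succ] using huv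
    ext j
    fin_cases i <;> fin_cases j <;> simp <;> grind
  · rintro ⟨α, β, hαβ | hαβ, hdep⟩
    · have : α • (u ⨯₃ v) = 0 := by
        rw [← LinearMap.map_smul, eq_neg_of_add_eq_zero_left hdep]
        simp
      exact (smul_eq_zero.1 this).resolve_left hαβ
    · have : β • (u ⨯₃ v) = 0 := by
        rw [← LinearMap.map_smul₂, eq_neg_of_add_eq_zero_right hdep]
        simp
      exact (smul_eq_zero.1 this).resolve_left hαβ

namespace Quaternion

variable {R : Type*} [CommRing R]

def imVec (q : ℍ[R]) : Fin 3 → R := ![q.imI, q.imJ, q.imK]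

theorem eq_zero_iff_re_eq_zero_and_imVec_eq_zero {q : ℍ[R]} :
    q = 0 ↔ q.re = 0 ∧ imVec q = 0 := by
  simp [Quaternion.ext_iff, imVec, funext_iff, Fin.forall_fin_succ]

theorem coe_mul_im_add_coe_mul_im_eq_zero_iff (α β : R) (f h : ℍ[R]) :
    (α : ℍ[R]) * f.im + β * h.im = 0 ↔ α • imVec f + β • imVec h = 0 := by
  simp [Quaternion.ext_iff, imVec, funext_iff, Fin.forall_fin_succ]

theorem re_mul_sub_mul (h f : ℍ[R]) : (h * f - f * h).re = 0 := by
  simp only [re_sub, re_mul]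
  ring

theorem imVec_mul_sub_mul (h f : ℍ[R]) :
    imVec (h * f - f * h) = (2 : R) • (imVec h ⨯₃ imVec f) := by
  ext i
  fin_cases i <;> simp [imVec, cross_apply] <;> ring

theorem commute_iff_imVec_cross_eq_zero [IsDomain R] [NeZero (2 : R)] {h f : ℍ[R]} :
    Commute h f ↔ imVec h ⨯₃ imVec f = 0 := by
  rw [commute_iff_eq, ← sub_eq_zero, eq_zero_iff_re_eq_zero_and_imVec_eq_zero, re_mul_sub_mul,
    imVec_mul_sub_mul, smul_eq_zero, or_iff_right two_ne_zero, and_iff_right rfl]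

theorem mul_mul_star_sub_star_mul_mul (h f : ℍ[R]) :
    h * f * star h - star h * f * h = (2 * h.re) • (h * f - f * h) := by
  ext <;> simp <;> ring

theorem mul_mul_star_eq_star_mul_mul_iff [IsDomain R] [NeZero (2 : R)] {h f : ℍ[R]} :
    h * f * star h = star h * f * h ↔ h.re = 0 ∨ Commute h f := by
  rw [← sub_eq_zero, mul_mul_star_sub_star_mul_mul, smul_eq_zero, mul_eq_zero, sub_eq_zero,
    commute_iff_eq, or_iff_right two_ne_zero]

end Quaternion

theorem conj_eq_conj_reverse_iff {A : Type*} [CommRing A] [IsDomain A] [Algebra ℝ A]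
    (f h : Quaternion A) :
    h * f * star h = star h * f * h ↔
      h.re = 0 ∨
        ∃ α β : A, (α ≠ 0 ∨ β ≠ 0) ∧
          (α : Quaternion A) * f.im + (β : Quaternion A) * h.im = 0 := by
  have : CharZero A := charZero_of_injective_algebraMap (algebraMap ℝ A).injective
  simp_rw [mul_mul_star_eq_star_mul_mul_iff, commute_iff_imVec_cross_eq_zero,
    crossProduct_eq_zero_iff_exists, coe_mul_im_add_coe_mul_im_eq_zero_iff]
end

section
/- Let A be a formally real integral domain which is an ℝ-algebra. Let I₀ be an imaginary unit, let f = f₀ + f₁·ι(I₀) with f₀, f₁ ∈ A, f₁ ≠ 0, and let h ∈ Quaternion A be not I₀-sliced. Then h * f * star h is I₀-sliced if and only if there exist an imaginary unit J₀ whose vector part is orthogonal to that of I₀ in ℝ³ and a nonzero I₀-sliced g ∈ Quaternion A such that h = ι(J₀) * g. (Theorem 5.4, case (ii).) -/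
open Quaternion

/-!
Fix a pure unit `J` orthogonal to `I`. Then `ℍ[A] = ℂ_I ⊕ ℂ_I J`, where `ℂ_I = {a + bI}` is the
commutative centralizer of `I`, and `J z = z̄ J` for `z ∈ ℂ_I`. Writing `h = p + qJ` with
`p, q ∈ ℂ_I` gives `h f h* = (p p̄ f + q q̄ f̄) + p q (f̄ - f) J`, so `h f h*` is `I`-sliced iff
`p q (f̄ - f) = 0`. As `f̄ - f = -2 f₁ I ≠ 0` and `ℍ[A]` has no zero divisors (the norm is a sum of
four squares), `p = 0` or `q = 0`; the latter would make `h` sliced, so `h = qJ = J q̄`.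
-/

section RealAlgebra

theorem eq_zero_of_self_eq_neg {M : Type*} [AddCommGroup M] [Module ℝ M] {x : M} (h : x = -x) :
    x = 0 := by
  have h2 : (2 : ℝ) • x = 0 := by rw [two_smul]; nth_rewrite 2 [h]; exact add_neg_cancel x
  exact (smul_eq_zero.mp h2).resolve_left two_ne_zero

variable {B : Type*} [Ring B] [Algebra ℝ B] {i j : B}

theorem exists_commute_add_mul (hi : i * i = -1) (hj : j * j = -1) (hij : j * i = -(i * j))
    (x : B) : ∃ p q : B, Commute i p ∧ Commute i q ∧ x = p + q * j := by
  have hii : ∀ a : B, a * i * i = -a := fun a => by rw [mul_assoc, hi, mul_neg_one]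
  have hiii : ∀ a : B, i * (i * a * i) = -(a * i) := fun a => by
    rw [← mul_assoc, ← mul_assoc, hi, neg_one_mul, neg_mul]
  set y := x + i * x * i
  have hy : i * y = -(y * i) := by
    simp only [y, mul_add, add_mul, hii, hiii, neg_add_rev, neg_neg]
  refine ⟨(2⁻¹ : ℝ) • (x - i * x * i), -(2⁻¹ : ℝ) • (y * j), ?_, ?_, ?_⟩
  · refine Commute.smul_right ?_ _
    show i * (x - i * x * i) = (x - i * x * i) * i
    rw [mul_sub, sub_mul, hii, hiii, sub_neg_eq_add, sub_neg_eq_add, add_comm]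
  · refine Commute.smul_right ?_ _
    show i * (y * j) = y * j * i
    rw [← mul_assoc, hy, mul_assoc, hij, mul_neg, neg_mul, mul_assoc]
  · rw [neg_smul, neg_mul, smul_mul_assoc, mul_assoc y, hj, mul_neg_one]
    module

theorem eq_zero_of_commute_add_mul (hi : i * i = -1) (hj : j * j = -1) (hij : j * i = -(i * j))
    {p q : B} (hp : Commute i p) (hq : Commute i q) (h : Commute i (p + q * j)) : q = 0 := by
  have hc : Commute i (q * j) := by simpa using h.sub_right hp
  have hqji : q * j * i = 0 := by
    refine eq_zero_of_self_eq_neg ?_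
    calc q * j * i = i * q * j := by rw [← hc.eq, mul_assoc]
      _ = -(q * j * i) := by rw [hq.eq, mul_assoc, mul_assoc q j, hij, mul_neg, neg_neg]
  calc q = q * j * i * (i * j) := by
        rw [mul_assoc, ← mul_assoc i, hi, neg_one_mul, mul_neg, mul_assoc, hj]; simp
    _ = 0 := by rw [hqji, zero_mul]

end RealAlgebra

theorem noZeroDivisors_of_formallyRealFour {A : Type*} [CommRing A] [IsDomain A]
    (hA : FormallyRealFour A) :
    NoZeroDivisors ℍ[A] where
  eq_zero_or_eq_zero_of_mul_eq_zero {p q} hpq := by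
    have eq_zero_of_normSq : ∀ r : ℍ[A], normSq r = 0 → r = 0 := fun r hr => by
      obtain ⟨h0, h1, h2, h3⟩ := hA _ _ _ _ ((normSq_def' r).symm.trans hr)
      ext <;> assumption
    have : normSq p * normSq q = 0 := by rw [← map_mul, hpq, map_zero]
    exact (mul_eq_zero.mp this).imp (eq_zero_of_normSq p) (eq_zero_of_normSq q)

section QuaternionSlices

variable {A : Type*} [CommRing A] [Algebra ℝ A]

@[simp] theorem qmap_re (q : ℍ[ℝ]) : (qmap q : ℍ[A]).re = algebraMap ℝ A q.re := rfl
@[simp] theorem qmap_imI (q : ℍ[ℝ]) : (qmap q : ℍ[A]).imI = algebraMap ℝ A q.imI := rfl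
@[simp] theorem qmap_imJ (q : ℍ[ℝ]) : (qmap q : ℍ[A]).imJ = algebraMap ℝ A q.imJ := rfl
@[simp] theorem qmap_imK (q : ℍ[ℝ]) : (qmap q : ℍ[A]).imK = algebraMap ℝ A q.imK := rfl

theorem qmap_mul (p q : ℍ[ℝ]) : (qmap (p * q) : ℍ[A]) = qmap p * qmap q := by
  ext <;> simp

theorem qmap_neg_one : (qmap (-1) : ℍ[A]) = -1 := by
  ext <;> simp

theorem star_qmap_of_re_eq_zero {I : ℍ[ℝ]} (hI : I.re = 0) : star (qmap I : ℍ[A]) = -qmap I := by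
  ext <;> simp [hI]

theorem isImaginaryUnit_iff {I : ℍ[ℝ]} :
    IsImaginaryUnit I ↔ I.re = 0 ∧ I.imI ^ 2 + I.imJ ^ 2 + I.imK ^ 2 = 1 := by
  refine and_congr_right fun hI => ?_
  rw [sq_eq_neg_normSq.mpr hI, neg_inj, ← coe_one, coe_inj, normSq_def', hI]
  ring_nf

theorem IsImaginaryUnit.qmap_mul_self {I : ℍ[ℝ]} (hI : IsImaginaryUnit I) :
    (qmap I : ℍ[A]) * qmap I = -1 := by
  rw [← qmap_mul, ← sq, hI.2, qmap_neg_one]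

theorem IsImaginaryUnit.sum_sq_algebraMap {I : ℍ[ℝ]} (hI : IsImaginaryUnit I) :
    algebraMap ℝ A I.imI ^ 2 + algebraMap ℝ A I.imJ ^ 2 + algebraMap ℝ A I.imK ^ 2 = 1 := by
  simpa using congrArg (algebraMap ℝ A) (isImaginaryUnit_iff.mp hI).2

theorem OrthIm.qmap_anticomm {I J : ℍ[ℝ]} (hI : I.re = 0) (hJ : J.re = 0) (hIJ : OrthIm I J) :
    (qmap J : ℍ[A]) * qmap I = -(qmap I * qmap J) := by
  have hIJ' : I.imI * J.imI + I.imJ * J.imJ + I.imK * J.imK = 0 := hIJ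
  have : J * I = -(I * J) := by ext <;> simp [hI, hJ] <;> linarith
  rw [← qmap_mul, ← qmap_mul, this]
  ext <;> simp

theorem exists_isImaginaryUnit_orthIm (I : ℍ[ℝ]) :
    ∃ J : ℍ[ℝ], IsImaginaryUnit J ∧ OrthIm I J := by
  by_cases hyz : I.imJ = 0 ∧ I.imK = 0
  · refine ⟨(⟨0, 0, 1, 0⟩ : ℍ[ℝ]), isImaginaryUnit_iff.mpr ⟨rfl, by norm_num⟩, ?_⟩
    simp [OrthIm, hyz.1]
  · have hpos : 0 < I.imJ ^ 2 + I.imK ^ 2 := by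
      rcases not_and_or.mp hyz with h | h <;> positivity
    set r := √(I.imJ ^ 2 + I.imK ^ 2)
    have hr : r ^ 2 = I.imJ ^ 2 + I.imK ^ 2 := Real.sq_sqrt hpos.le
    have hr0 : r ≠ 0 := by positivity
    refine ⟨(⟨0, 0, -I.imK / r, I.imJ / r⟩ : ℍ[ℝ]), isImaginaryUnit_iff.mpr ⟨rfl, ?_⟩, ?_⟩
    · dsimp only
      field_simp
      linarith
    · simp only [OrthIm]
      field_simp
      ring

theorem IsSliced.commute {I : ℍ[ℝ]} {q : ℍ[A]} (hq : IsSliced I q) : Commute (qmap I) q := by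
  obtain ⟨a, b, rfl⟩ := hq
  exact (coe_commute a _).symm.add_right ((coe_commute b _).symm.mul_right (Commute.refl _))

theorem isSliced_iff_commute {I : ℍ[ℝ]} (hI : IsImaginaryUnit I) {q : ℍ[A]} :
    IsSliced I q ↔ Commute (qmap I) q := by
  refine ⟨IsSliced.commute, fun hq => ?_⟩
  set x := algebraMap ℝ A I.imI
  set y := algebraMap ℝ A I.imJ
  set z := algebraMap ℝ A I.imK
  have hn : x ^ 2 + y ^ 2 + z ^ 2 = 1 := hI.sum_sq_algebraMap
  have h1 := congrArg QuaternionAlgebra.imI hq.eq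
  have h2 := congrArg QuaternionAlgebra.imJ hq.eq
  have h3 := congrArg QuaternionAlgebra.imK hq.eq
  simp only [imI_mul, imJ_mul, imK_mul, qmap_re, qmap_imI, qmap_imJ, qmap_imK, hI.1, map_zero,
    zero_mul, mul_zero, add_zero, zero_add, zero_sub] at h1 h2 h3
  have e1 : y * q.imK - z * q.imJ = 0 := eq_zero_of_self_eq_neg (by linear_combination h1)
  have e2 : z * q.imI - x * q.imK = 0 := eq_zero_of_self_eq_neg (by linear_combination h2)
  have e3 : x * q.imJ - y * q.imI = 0 := eq_zero_of_self_eq_neg (by linear_combination h3)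
  refine ⟨q.re, x * q.imI + y * q.imJ + z * q.imK, ?_⟩
  ext <;> simp [hI.1]
  · linear_combination (-q.imI) * hn + (-y) * e3 + z * e2
  · linear_combination (-q.imJ) * hn + x * e3 - z * e1
  · linear_combination (-q.imK) * hn - x * e2 + y * e1

variable {I J : ℍ[ℝ]} {p q f : ℍ[A]}

theorem Commute.of_commute_qmap (hI : IsImaginaryUnit I) (hp : Commute (qmap I) p)
    (hq : Commute (qmap I) q) : Commute p q := by
  obtain ⟨c, d, rfl⟩ := (isSliced_iff_commute hI).mpr hq
  exact (coe_commute c p).symm.add_right ((coe_commute d p).symm.mul_right hp.symm)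

theorem Commute.qmap_star_right (hI : I.re = 0) (hp : Commute (qmap I) p) :
    Commute (qmap I) (star p) := by
  simpa [star_qmap_of_re_eq_zero hI] using hp.star_star

theorem qmap_mul_eq_star_mul (hI : IsImaginaryUnit I) (hJ : J.re = 0) (hIJ : OrthIm I J)
    (hp : Commute (qmap I) p) : qmap J * p = star p * qmap J := by
  obtain ⟨c, d, rfl⟩ := (isSliced_iff_commute hI).mpr hp
  have hJI : (qmap J : ℍ[A]) * qmap I = -(qmap I * qmap J) := hIJ.qmap_anticomm hI.1 hJ
  rw [star_add, star_mul, star_coe, star_coe, star_qmap_of_re_eq_zero hI.1, mul_add, add_mul,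
    (coe_commute c _).eq, ← mul_assoc, (coe_commute d _).symm.eq, mul_assoc, hJI, neg_mul,
    neg_mul, mul_neg, ← mul_assoc, (coe_commute d _).eq]

theorem add_mul_qmap_mul_mul_star (hI : IsImaginaryUnit I) (hJ : IsImaginaryUnit J)
    (hIJ : OrthIm I J) (hp : Commute (qmap I) p) (hq : Commute (qmap I) q)
    (hf : Commute (qmap I) f) :
    (p + q * qmap J) * f * star (p + q * qmap J) =
      (p * star p * f + q * star q * star f) + p * q * (star f - f) * qmap J := by
  set j : ℍ[A] := qmap J
  have hsp := hp.qmap_star_right hI.1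
  have hsq := hq.qmap_star_right hI.1
  have hstar : star (p + q * j) = star p - q * j := by
    rw [star_add, star_mul, star_qmap_of_re_eq_zero hJ.1, neg_mul,
      qmap_mul_eq_star_mul hI hJ.1 hIJ hsq, star_star, sub_eq_add_neg]
  have hjfp : j * (f * star p) = p * star f * j := by
    rw [qmap_mul_eq_star_mul hI hJ.1 hIJ (hf.mul_right hsp), star_mul, star_star]
  have hjfq : j * (f * q) = star q * star f * j := by
    rw [qmap_mul_eq_star_mul hI hJ.1 hIJ (hf.mul_right hq), star_mul]
  have hfp : f * star p = star p * f := (hf.of_commute_qmap hI hsp).eq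
  have hfq : f * q = q * f := (hf.of_commute_qmap hI hq).eq
  have hqp : q * p = p * q := (hq.of_commute_qmap hI hp).eq
  calc (p + q * j) * f * star (p + q * j)
      = p * (f * star p) - p * (f * q) * j + q * (j * (f * star p)) - q * (j * (f * q)) * j := by
        rw [hstar]; noncomm_ring
    _ = p * star p * f - p * q * f * j + q * p * star f * j - q * star q * star f * (j * j) := by
        rw [hjfp, hjfq, hfp, hfq]; noncomm_ring
    _ = (p * star p * f + q * star q * star f) + p * q * (star f - f) * j := by
        rw [hJ.qmap_mul_self, hqp]; noncomm_ring

theorem commute_qmap_add_mul_qmap_mul_mul_star_iff (hI : IsImaginaryUnit I)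
    (hJ : IsImaginaryUnit J) (hIJ : OrthIm I J) (hp : Commute (qmap I) p)
    (hq : Commute (qmap I) q) (hf : Commute (qmap I) f) :
    Commute (qmap I) ((p + q * qmap J) * f * star (p + q * qmap J)) ↔
      p * q * (star f - f) = 0 := by
  have hf' := hf.qmap_star_right hI.1
  have hscalar : Commute (qmap I) (p * star p * f + q * star q * star f) :=
    ((hp.mul_right (hp.qmap_star_right hI.1)).mul_right hf).add_right
      ((hq.mul_right (hq.qmap_star_right hI.1)).mul_right hf')
  rw [add_mul_qmap_mul_mul_star hI hJ hIJ hp hq hf]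
  refine ⟨eq_zero_of_commute_add_mul hI.qmap_mul_self hJ.qmap_mul_self
    (hIJ.qmap_anticomm hI.1 hJ.1) hscalar ((hp.mul_right hq).mul_right (hf'.sub_right hf)), ?_⟩
  intro h0
  rwa [h0, zero_mul, add_zero]

theorem star_coe_add_coe_mul_qmap_ne_self (hI : IsImaginaryUnit I) (a : A) {b : A}
    (hb : b ≠ 0) : star ((a : ℍ[A]) + (b : ℍ[A]) * qmap I) ≠ (a : ℍ[A]) + (b : ℍ[A]) * qmap I := by
  intro h
  have hstar :
      star ((a : ℍ[A]) + (b : ℍ[A]) * qmap I) = (a : ℍ[A]) + -((b : ℍ[A]) * qmap I) := by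
    rw [star_add, star_mul, star_coe, star_coe, star_qmap_of_re_eq_zero hI.1, neg_mul,
      (coe_commute b _).eq]
  have hbI : (b : ℍ[A]) * qmap I = 0 :=
    eq_zero_of_self_eq_neg (add_left_cancel (hstar.symm.trans h)).symm
  refine hb (coe_injective ?_)
  rw [coe_zero, ← neg_eq_zero, ← mul_neg_one, ← hI.qmap_mul_self, ← mul_assoc, hbI, zero_mul]

end QuaternionSlices

theorem conjugation_sliced_iff_case_same_slice
    {A : Type*} [CommRing A] [IsDomain A] [Algebra ℝ A] (hFR : FormallyRealFour A)
    (I₀ : Quaternion ℝ) (hI₀ : IsImaginaryUnit I₀)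
    (f₀ f₁ : A) (hf₁ : f₁ ≠ 0) (f : Quaternion A)
    (hf : f = (f₀ : Quaternion A) + (f₁ : Quaternion A) * qmap I₀)
    (h : Quaternion A) (hh : ¬ IsSliced I₀ h) :
    IsSliced I₀ (h * f * star h) ↔
      ∃ J₀ : Quaternion ℝ, IsImaginaryUnit J₀ ∧ OrthIm I₀ J₀ ∧
        ∃ g : Quaternion A, IsSliced I₀ g ∧ g ≠ 0 ∧ h = qmap J₀ * g := by
  have hfI : Commute (qmap I₀) f := hf ▸ IsSliced.commute ⟨f₀, f₁, rfl⟩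
  simp only [isSliced_iff_commute hI₀] at hh ⊢
  constructor
  · intro hc
    obtain ⟨J₀, hJ₀, hIJ⟩ := exists_isImaginaryUnit_orthIm I₀
    obtain ⟨p, q, hp, hq, rfl⟩ := exists_commute_add_mul hI₀.qmap_mul_self hJ₀.qmap_mul_self
      (hIJ.qmap_anticomm hI₀.1 hJ₀.1) h
    rw [commute_qmap_add_mul_qmap_mul_mul_star_iff hI₀ hJ₀ hIJ hp hq hfI] at hc
    have := noZeroDivisors_of_formallyRealFour hFR
    have hsf : star f - f ≠ 0 :=
      sub_ne_zero.mpr (hf ▸ star_coe_add_coe_mul_qmap_ne_self hI₀ f₀ hf₁)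
    rcases mul_eq_zero.mp ((mul_eq_zero.mp hc).resolve_right hsf) with rfl | rfl
    · have hq' := hq.qmap_star_right hI₀.1
      refine ⟨J₀, hJ₀, hIJ, star q, hq', fun hq0 => hh ?_, ?_⟩
      · simp [star_eq_zero.mp hq0]
      · rw [zero_add, qmap_mul_eq_star_mul hI₀ hJ₀.1 hIJ hq', star_star]
    · exact absurd (by simpa using hp) hh
  · rintro ⟨J₀, hJ₀, hIJ, g, hg, -, rfl⟩
    rw [qmap_mul_eq_star_mul hI₀ hJ₀.1 hIJ hg, ← zero_add (star g * _),
      commute_qmap_add_mul_qmap_mul_mul_star_iff hI₀ hJ₀ hIJ (Commute.zero_right _)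
        (hg.qmap_star_right hI₀.1) hfI, zero_mul, zero_mul]
end

section
/- Let A be a formally real integral domain which is an ℝ-algebra. Let I₀ be an imaginary unit, let h = h₀ + h₁·ι(I₀) with h₀, h₁ ∈ A, h₁ ≠ 0, and let g ∈ Quaternion A. Then there exists an I₀-sliced f ∈ Quaternion A with h * f * star h = g if and only if g is I₀-sliced and there exists k ∈ Quaternion A with g = (h₀² + h₁²)·k. (Proposition 5.11, case (i).) -/
open Quaternion

/- With `u = ι(I₀)`, a pure quaternion of norm one, the elements `a + b u` commute with each
other, so conjugating a sliced `f` by `h = h₀ + h₁ u` gives `f * h * star h = (h₀² + h₁²) f`.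
Conversely, `q ↦ q.re + (q * star u).re * u` is an `A`-linear retraction onto the sliced
elements; if `g = (h₀² + h₁²) k` is sliced, then `g` is the conjugate of the retraction of `k`. -/

namespace Quaternion

variable {A : Type*} [CommRing A]

theorem commute_coe_add_coe_mul (u : ℍ[A]) (a b c d : A) :
    Commute ((a : ℍ[A]) + b * u) ((c : ℍ[A]) + d * u) := by
  have hcoe (r : A) (q : ℍ[A]) : Commute (r : ℍ[A]) q := coe_commutes r q
  have huu : Commute u (d * u) := .mul_right (hcoe d u).symm (.refl u)
  exact .add_left (hcoe a _) (.add_right (hcoe c _).symm (.mul_left (hcoe b _) huu))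

theorem mul_mul_star_of_commute {h q : ℍ[A]} (hq : Commute h q) :
    h * q * star h = normSq h * q := by
  rw [hq.eq, mul_assoc, self_mul_star, coe_commutes]

theorem normSq_coe_add_coe_mul {u : ℍ[A]} (hu : u.re = 0) (a b : A) :
    normSq ((a : ℍ[A]) + (b : ℍ[A]) * u) = a ^ 2 + b ^ 2 * normSq u := by
  simp [normSq_add, coe_mul_eq_smul, normSq_smul, normSq_coe, hu]

def sliceProj (u q : ℍ[A]) : ℍ[A] := (q.re : ℍ[A]) + ((q * star u).re : ℍ[A]) * u

theorem sliceProj_coe_mul (u : ℍ[A]) (r : A) (q : ℍ[A]) :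
    sliceProj u (r * q) = r * sliceProj u q := by
  simp only [sliceProj, coe_mul_eq_smul, re_smul, smul_eq_mul, coe_mul, smul_add,
    smul_mul_assoc]

theorem sliceProj_coe_add_coe_mul {u : ℍ[A]} (hu : u.re = 0) (hu_norm : normSq u = 1) (a b : A) :
    sliceProj u ((a : ℍ[A]) + b * u) = a + b * u := by
  have hre : ((a : ℍ[A]) + b * u).re = a := by simp [coe_mul_eq_smul, hu]
  have hcoord : (((a : ℍ[A]) + b * u) * star u).re = b := by
    rw [add_mul, mul_assoc, self_mul_star, hu_norm]
    simp [coe_mul_eq_smul, hu]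
  rw [sliceProj, hre, hcoord]

end Quaternion

section Slice

variable {A : Type*} [CommRing A] [Algebra ℝ A]

theorem IsImaginaryUnit.re_qmap {I : ℍ[ℝ]} (hI : IsImaginaryUnit I) :
    (qmap (A := A) I).re = 0 := by
  simp [qmap, hI.1]

theorem IsImaginaryUnit.normSq_qmap {I : ℍ[ℝ]}
    (hI : IsImaginaryUnit I) : normSq (qmap (A := A) I) = 1 := by
  have hI1 : normSq I = 1 := by
    have := sq_eq_neg_normSq.2 hI.1
    rw [hI.2, neg_inj] at this
    exact coe_injective this.symm
  have := congrArg (algebraMap ℝ A) hI1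
  rw [normSq_def'] at this ⊢
  simpa [qmap] using this

theorem IsSliced.coe_mul {I : ℍ[ℝ]} {q : ℍ[A]}
    (hq : IsSliced I q) (r : A) : IsSliced I ((r : ℍ[A]) * q) := by
  obtain ⟨a, b, rfl⟩ := hq
  exact ⟨r * a, r * b, by rw [mul_add, ← mul_assoc, Quaternion.coe_mul, Quaternion.coe_mul]⟩

theorem isSliced_sliceProj_qmap (I : ℍ[ℝ]) (q : ℍ[A]) :
    IsSliced I (sliceProj (qmap I) q) :=
  ⟨_, _, rfl⟩

end Slice

theorem exists_sliced_conjugated_eq_case_same_slice_general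
    {A : Type*} [CommRing A] [Algebra ℝ A]
    (I₀ : Quaternion ℝ) (hI₀ : IsImaginaryUnit I₀)
    (h₀ h₁ : A) (h : Quaternion A)
    (hh : h = (h₀ : Quaternion A) + (h₁ : Quaternion A) * qmap I₀)
    (g : Quaternion A) :
    (∃ f : Quaternion A, IsSliced I₀ f ∧ h * f * star h = g) ↔
      IsSliced I₀ g ∧ ∃ k : Quaternion A, g = ((h₀ ^ 2 + h₁ ^ 2 : A) : Quaternion A) * k := by
  have hconj (f : ℍ[A]) (hf : IsSliced I₀ f) :
      h * f * star h = ((h₀ ^ 2 + h₁ ^ 2 : A) : ℍ[A]) * f := by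
    obtain ⟨c, d, rfl⟩ := hf
    rw [hh, mul_mul_star_of_commute (commute_coe_add_coe_mul _ h₀ h₁ c d),
      normSq_coe_add_coe_mul hI₀.re_qmap, hI₀.normSq_qmap, mul_one]
  constructor
  · rintro ⟨f, hf, rfl⟩
    rw [hconj f hf]
    exact ⟨hf.coe_mul _, _, rfl⟩
  · rintro ⟨⟨a, b, hg⟩, k, rfl⟩
    refine ⟨sliceProj (qmap I₀) k, isSliced_sliceProj_qmap I₀ k, ?_⟩
    rw [hconj _ (isSliced_sliceProj_qmap I₀ k), ← sliceProj_coe_mul, hg,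
      sliceProj_coe_add_coe_mul hI₀.re_qmap hI₀.normSq_qmap]

theorem exists_sliced_conjugated_eq_case_same_slice
    {A : Type*} [CommRing A] [IsDomain A] [Algebra ℝ A] (hFR : FormallyRealFour A)
    (I₀ : Quaternion ℝ) (hI₀ : IsImaginaryUnit I₀)
    (h₀ h₁ : A) (hh₁ : h₁ ≠ 0) (h : Quaternion A)
    (hh : h = (h₀ : Quaternion A) + (h₁ : Quaternion A) * qmap I₀)
    (g : Quaternion A) :
    (∃ f : Quaternion A, IsSliced I₀ f ∧ h * f * star h = g) ↔
      IsSliced I₀ g ∧ ∃ k : Quaternion A, g = ((h₀ ^ 2 + h₁ ^ 2 : A) : Quaternion A) * k :=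
  exists_sliced_conjugated_eq_case_same_slice_general I₀ hI₀ h₀ h₁ h hh g
end

section
/- Let A be a commutative ring and let f ∈ Quaternion A have scalar part s ∈ A and vector part v = v₁i + v₂j + v₃k; set N := v₁² + v₂² + v₃² ∈ A. Then for every d ∈ ℕ, f^d = Σ_{n=0}^{⌊d/2⌋} (−1)^n·(d choose 2n)·s^{d−2n}·N^n + (Σ_{n=0}^{⌊(d−1)/2⌋} (−1)^n·(d choose 2n+1)·s^{d−(2n+1)}·N^n)·v, where elements of A are identified with scalar quaternions. (Lemma 7.1.) -/
/-!
Write `f = s + v` with `v = f.im`. The scalar `s` is central and `v ^ 2 = -N` is again a scalar,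
so in the binomial expansion of `(s + v) ^ d` the even powers of `v` are the scalars `(-N) ^ n`
and the odd ones are `(-N) ^ n * v`.
-/

open Quaternion

theorem Finset.sum_range_two_mul {M : Type*} [AddCommMonoid M] (g : ℕ → M) (K : ℕ) :
    ∑ m ∈ range (2 * K), g m = ∑ n ∈ range K, g (2 * n) + ∑ n ∈ range K, g (2 * n + 1) := by
  induction K with
  | zero => simp
  | succ k ih =>
    rw [Nat.mul_succ, sum_range_succ, sum_range_succ, ih, sum_range_succ, sum_range_succ]
    abel

theorem Commute.add_pow_eq_even_add_odd {R : Type*} [Semiring R] {x y : R} (h : Commute x y)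
    (d : ℕ) :
    (x + y) ^ d =
      ∑ n ∈ Finset.range (d / 2 + 1), x ^ (2 * n) * y ^ (d - 2 * n) * d.choose (2 * n) +
      ∑ n ∈ Finset.range ((d - 1) / 2 + 1),
        x ^ (2 * n + 1) * y ^ (d - (2 * n + 1)) * d.choose (2 * n + 1) := by
  set term : ℕ → R := fun m => x ^ m * y ^ (d - m) * d.choose m
  have term_eq_zero {m : ℕ} (hm : d < m) : term m = 0 := by
    simp [term, Nat.choose_eq_zero_of_lt hm]
  have extend {K : ℕ} (hK : d + 1 ≤ K) : ∑ m ∈ Finset.range (d + 1), term m =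
      ∑ m ∈ Finset.range K, term m :=
    Finset.sum_subset (Finset.range_subset_range.mpr hK) fun m _ hm =>
      term_eq_zero (by simp only [Finset.mem_range] at hm; omega)
  rw [h.add_pow, extend (K := 2 * (d + 1)) (by omega), Finset.sum_range_two_mul]
  congr 1 <;> symm <;> refine Finset.sum_subset (Finset.range_subset_range.mpr (by omega))
    fun m _ hm => term_eq_zero ?_ <;> simp only [Finset.mem_range] at hm <;> omega

theorem algebraMap_add_pow_of_sq_eq_algebraMap {A R : Type*} [CommSemiring A] [Semiring R]
    [Algebra A R] (s c : A) {v : R} (hv : v ^ 2 = algebraMap A R c) (d : ℕ) :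
    (algebraMap A R s + v) ^ d =
      algebraMap A R (∑ n ∈ Finset.range (d / 2 + 1), d.choose (2 * n) * s ^ (d - 2 * n) * c ^ n)
      + algebraMap A R (∑ n ∈ Finset.range ((d - 1) / 2 + 1),
          d.choose (2 * n + 1) * s ^ (d - (2 * n + 1)) * c ^ n) * v := by
  have hpow (n : ℕ) : v ^ (2 * n) = algebraMap A R (c ^ n) := by rw [pow_mul, hv, map_pow]
  rw [add_comm, (Algebra.commute_algebraMap_right s v).add_pow_eq_even_add_odd, map_sum, map_sum,
    Finset.sum_mul]
  congr 1 <;> refine Finset.sum_congr rfl fun n _ => ?_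
  · rw [hpow, ← map_pow, ← map_natCast (algebraMap A R), ← map_mul, ← map_mul]
    congr 1
    ring
  · rw [pow_succ, hpow, ← map_pow, ← map_natCast (algebraMap A R), mul_assoc, ← map_mul,
      ← Algebra.commutes, ← mul_assoc, ← map_mul]
    congr 2
    ring

theorem pow_eq_sum_formula {A : Type*} [CommRing A] (f : Quaternion A)
    (s N : A) (hs : s = f.re)
    (hN : N = f.imI ^ 2 + f.imJ ^ 2 + f.imK ^ 2) (d : ℕ) :
    f ^ d =
      ((∑ n ∈ Finset.range (d / 2 + 1),
          (-1 : A) ^ n * (d.choose (2 * n) : A) * s ^ (d - 2 * n) * N ^ n : A) : Quaternion A)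
      + ((∑ n ∈ Finset.range ((d - 1) / 2 + 1),
          (-1 : A) ^ n * (d.choose (2 * n + 1) : A) * s ^ (d - (2 * n + 1)) * N ^ n : A) :
            Quaternion A) * f.im := by
  have him_sq : f.im ^ 2 = algebraMap A ℍ[A] (-N) := by
    rw [im_sq, hN, normSq_def', algebraMap_def]
    simp
  have hf : f = algebraMap A ℍ[A] s + f.im := by rw [hs, algebraMap_def, re_add_im]
  conv_lhs => rw [hf]
  rw [algebraMap_add_pow_of_sq_eq_algebraMap s (-N) him_sq, algebraMap_def]
  refine congr_arg₂ (· + ·) (congr_arg _ (Finset.sum_congr rfl fun n _ => ?_))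
    (congr_arg (· * f.im) (congr_arg _ (Finset.sum_congr rfl fun n _ => ?_))) <;> ring
end
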